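/- Let X be a simplicial complex on vertex set V, k ≥ 0, and σ ∈ X(k). Then Σ_{τ ∈ σ(k−1)} deg_X(τ) = (k+1)(deg_X(σ) + 1) + Σ_{v ∈ V∖σ, v ∉ lk(X,σ)} |{τ ∈ σ(k−1) : v ∈ lk(X,τ)}|. -/

import Mathlib

open Matrix BigOperators

/-- A finite abstract simplicial complex on vertex type `V` (the empty face is included). -/
structure SC (V : Type) [DecidableEq V] where
  faces : Finset (Finset V)
  empty_mem : ∅ ∈ faces
  down_closed : ∀ σ ∈ faces, ∀ τ ⊆ σ, τ ∈ faces

namespace SC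

variable {V : Type} [Fintype V] [DecidableEq V] [LinearOrder V] (X : SC V)

/-- The degree of a simplex: the number of cofacets. -/
def deg (σ : Finset V) : ℕ :=
  (X.faces.filter fun η => σ ⊆ η ∧ η.card = σ.card + 1).card

/-- Faces with `m` vertices, i.e. of dimension `m - 1`. -/
abbrev face (m : ℕ) := {σ : Finset V // σ ∈ X.faces ∧ σ.card = m}

/-- `sgn σ τ` for `τ ⊆ σ` with `|σ \ τ| = 1`: the sign `(-1)^i` where `i` is the
position of the vertex of `σ \ τ` in the increasing ordering of `σ`. -/
def sgn (σ τ : Finset V) : ℝ :=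
  ∑ u ∈ σ \ τ, (-1 : ℝ) ^ (σ.filter fun w => w < u).card

/-- The matrix of the simplicial coboundary map from `(m-1)`-cochains to `m`-cochains
(cochains are indexed by the number of vertices of the faces). -/
def CB (m : ℕ) : Matrix (X.face (m + 1)) (X.face m) ℝ :=
  fun σ τ => if τ.1 ⊆ σ.1 then sgn σ.1 τ.1 else 0

/-- The reduced Laplacian `L_{m-1} = d_{m-2} ∂_{m-2} + ∂_{m-1} d_{m-1}` acting on
cochains supported on faces with `m` vertices. -/
def Lap : (m : ℕ) → Matrix (X.face m) (X.face m) ℝ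
  | 0 => (X.CB 0)ᵀ * X.CB 0
  | m + 1 => (X.CB (m + 1))ᵀ * X.CB (m + 1) + X.CB m * (X.CB m)ᵀ

/-- The set of eigenvalues of the reduced Laplacian `L_{m-1}`. -/
def eigenvals (m : ℕ) : Set ℝ :=
  {μ | Module.End.HasEigenvalue (Matrix.toLin' (X.Lap m)) μ}

/-- The spectrum of the reduced Laplacian `L_{m-1}` as a multiset (roots of the
characteristic polynomial with multiplicity). -/
noncomputable def spec (m : ℕ) : Multiset ℝ := (X.Lap m).charpoly.roots

/-- The set of degrees of faces with `m` vertices. -/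
def degSet (m : ℕ) : Set ℕ := {N | ∃ σ ∈ X.faces, σ.card = m ∧ X.deg σ = N}

/-- All missing faces of `X` have dimension at most `d` (at most `d + 1` vertices). -/
def MissingBnd (d : ℕ) : Prop :=
  ∀ σ : Finset V, σ ∉ X.faces → (∀ τ ⊂ σ, τ ∈ X.faces) → σ.card ≤ d + 1

/-- `X` is a clique (flag) complex: any set of pairwise connected vertices is a face. -/
def Flag : Prop :=
  ∀ σ : Finset V, (∀ u ∈ σ, ∀ v ∈ σ, ({u, v} : Finset V) ∈ X.faces) → σ ∈ X.faces

/-- `φ` is a coboundary (an element of the image of the coboundary map). -/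
def IsCobound : (m : ℕ) → (X.face m → ℝ) → Prop
  | 0, φ => φ = 0
  | m + 1, φ => ∃ ψ : X.face m → ℝ, (X.CB m).mulVec ψ = φ

/-- The reduced cohomology with real coefficients vanishes in dimension `m - 1`:
every cocycle is a coboundary. -/
def Hvanish (m : ℕ) : Prop :=
  ∀ φ : X.face m → ℝ, (X.CB m).mulVec φ = 0 → X.IsCobound m φ

end SC

/-! A cofacet of the facet `σ.erase u` of `σ` is either `σ` itself or `insert v (σ.erase u)` with
`v ∉ σ`. Counting the pairs `(u, v)` of the second kind by `v` instead of by `u`, a vertex `v` of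
the link of `σ` is counted once for every `u ∈ σ`, by downward closure, which gives the term
`(k + 1) * deg σ`; the other vertices give the remaining sum. -/

namespace SC

open Finset

variable {V : Type} [DecidableEq V] (X : SC V)

theorem filter_insert_erase_eq_self {σ : Finset V} {v : V} (hv : insert v σ ∈ X.faces) :
    (σ.filter fun u => insert v (σ.erase u) ∈ X.faces) = σ :=
  filter_true_of_mem fun _ _ =>
    X.down_closed _ hv _ (insert_subset_insert v (erase_subset _ σ))

variable [Fintype V]

theorem deg_eq_card_filter (τ : Finset V) :
    X.deg τ = ((univ \ τ).filter fun v => insert v τ ∈ X.faces).card := by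
  symm
  refine card_bij (fun v _ => insert v τ) (fun v hv => ?_) (fun v hv w _ hvw => ?_) (fun η hη => ?_)
  · simp only [mem_filter, mem_sdiff, mem_univ, true_and] at hv ⊢
    exact ⟨hv.2, subset_insert v τ, card_insert_of_notMem hv.1⟩
  · exact (insert_inj (mem_sdiff.1 (mem_filter.1 hv).1).2).1 hvw
  · rw [mem_filter] at hη
    obtain ⟨hηX, hτη, hcard⟩ := hη
    obtain ⟨v, hv⟩ := card_eq_one.1 (by rw [card_sdiff_of_subset hτη]; omega : (η \ τ).card = 1)
    have hvτ : v ∉ τ := (mem_sdiff.1 (hv ▸ mem_singleton_self v)).2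
    have hvη : insert v τ = η := by rw [insert_eq, ← hv, sdiff_union_of_subset hτη]
    exact ⟨v, mem_filter.2 ⟨mem_sdiff.2 ⟨mem_univ v, hvτ⟩, hvη ▸ hηX⟩, hvη⟩

theorem deg_erase {σ : Finset V} (hσ : σ ∈ X.faces) {u : V} (hu : u ∈ σ) :
    X.deg (σ.erase u) = ((univ \ σ).filter fun v => insert v (σ.erase u) ∈ X.faces).card + 1 := by
  rw [deg_eq_card_filter, sdiff_erase (mem_univ u), filter_insert, insert_erase hu,
    if_pos hσ, card_insert_of_notMem]
  simp [hu]

end SC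

theorem degree_sum_identity_general {V : Type} [Fintype V] [DecidableEq V]
    (X : SC V) (k : ℕ) (σ : Finset V) (hσ : σ ∈ X.faces) (hcard : σ.card = k + 1) :
    ∑ u ∈ σ, X.deg (σ.erase u)
      = (k + 1) * (X.deg σ + 1)
        + ∑ v ∈ (Finset.univ \ σ).filter (fun v => insert v σ ∉ X.faces),
            (σ.filter fun u => insert v (σ.erase u) ∈ X.faces).card := by
  have hswap : ∑ u ∈ σ, ((Finset.univ \ σ).filter fun v => insert v (σ.erase u) ∈ X.faces).card
      = ∑ v ∈ Finset.univ \ σ, (σ.filter fun u => insert v (σ.erase u) ∈ X.faces).card := by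
    simp only [Finset.card_filter]
    exact Finset.sum_comm
  have hlink : ∑ v ∈ (Finset.univ \ σ).filter (fun v => insert v σ ∈ X.faces),
      (σ.filter fun u => insert v (σ.erase u) ∈ X.faces).card = X.deg σ * (k + 1) := by
    rw [Finset.sum_congr rfl fun v hv => by
        rw [X.filter_insert_erase_eq_self (Finset.mem_filter.1 hv).2, hcard],
      Finset.sum_const, smul_eq_mul, X.deg_eq_card_filter]
  rw [Finset.sum_congr rfl fun u hu => X.deg_erase hσ hu, Finset.sum_add_distrib, hswap,
    ← Finset.sum_filter_add_sum_filter_not _ (fun v => insert v σ ∈ X.faces), hlink]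
  simp only [Finset.sum_const, hcard, smul_eq_mul]
  ring

/-- Degree-sum identity: for a `k`-simplex `σ`,
`Σ_{τ ∈ σ(k-1)} deg(τ) = (k+1)(deg(σ)+1) + Σ_{v ∈ V∖σ, v ∉ lk(X,σ)} |{τ ∈ σ(k-1) : v ∈ lk(X,τ)}|`. -/
theorem degree_sum_identity {V : Type} [Fintype V] [DecidableEq V] [LinearOrder V]
    (X : SC V) (k : ℕ) (σ : Finset V) (hσ : σ ∈ X.faces) (hcard : σ.card = k + 1) :
    ∑ u ∈ σ, X.deg (σ.erase u)
      = (k + 1) * (X.deg σ + 1)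
        + ∑ v ∈ (Finset.univ \ σ).filter (fun v => insert v σ ∉ X.faces),
            (σ.filter fun u => insert v (σ.erase u) ∈ X.faces).card :=
  degree_sum_identity_general X k σ hσ hcard
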